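/- For every n, the inscribed cylinder-stack volume is at most the cone's volume π R² h / 3, which is at most the circumscribed cylinder-stack volume: V⁻(n) ≤ π R² h / 3 ≤ V⁺(n). -/

import Mathlib

/-!
After the substitution `r (x * h / n) = R * (1 - x / n)`, each stack is `π R² h / n³` times a sum
of squares: `∑ (n - k - 1)²` for the inscribed one and `∑ (n - k)²` for the circumscribed one.
Since `a³ - (a - 1)³ = 3a² - 3a + 1` lies between `3 (a - 1)²` and `3 a²` for `a ≥ 1`, both sums
are compared term by term with the telescoping sum `∑ ((n - k)³ - (n - k - 1)³) = n³`.
-/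

open Real Finset

theorem sum_range_sub_cube_sub_succ_cube (n : ℕ) :
    ∑ k ∈ range n, (((n : ℝ) - k) ^ 3 - ((n : ℝ) - (k + 1)) ^ 3) = (n : ℝ) ^ 3 := by
  have := sum_range_sub' (fun k : ℕ => ((n : ℝ) - k) ^ 3) n
  push_cast at this
  rw [this]
  ring

theorem sum_range_sq_sub_succ_le (n : ℕ) :
    ∑ k ∈ range n, ((n : ℝ) - (k + 1)) ^ 2 ≤ (n : ℝ) ^ 3 / 3 := by
  rw [← sum_range_sub_cube_sub_succ_cube, sum_div]
  refine sum_le_sum fun k hk => ?_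
  have hkn : (k : ℝ) + 1 ≤ n := by exact_mod_cast mem_range.mp hk
  nlinarith

theorem le_sum_range_sq_sub (n : ℕ) :
    (n : ℝ) ^ 3 / 3 ≤ ∑ k ∈ range n, ((n : ℝ) - k) ^ 2 := by
  rw [← sum_range_sub_cube_sub_succ_cube, sum_div]
  refine sum_le_sum fun k hk => ?_
  have hkn : (k : ℝ) + 1 ≤ n := by exact_mod_cast mem_range.mp hk
  nlinarith

theorem inscribed_le_cone_le_circumscribed_general (h R : ℝ) (hh : 0 < h)
    (r : ℝ → ℝ) (hr : ∀ z, r z = R * (1 - z / h)) (n : ℕ) (hn : 0 < n) :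
    (∑ k ∈ Finset.range n, π * r ((k + 1) * h / n) ^ 2 * (h / n)) ≤ π * R ^ 2 * h / 3 ∧
    π * R ^ 2 * h / 3 ≤ ∑ k ∈ Finset.range n, π * r (k * h / n) ^ 2 * (h / n) := by
  have hn₀ : (n : ℝ) ≠ 0 := by positivity
  set c := π * R ^ 2 * h / (n : ℝ) ^ 3 with hc_def
  have hc : 0 ≤ c := by positivity
  have slice (x : ℝ) : π * r (x * h / n) ^ 2 * (h / n) = c * ((n : ℝ) - x) ^ 2 := by
    rw [hr, hc_def]
    field_simp
  have cone : π * R ^ 2 * h / 3 = c * ((n : ℝ) ^ 3 / 3) := by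
    rw [hc_def]
    field_simp
  simp only [slice, ← mul_sum, cone]
  exact ⟨mul_le_mul_of_nonneg_left (sum_range_sq_sub_succ_le n) hc,
    mul_le_mul_of_nonneg_left (le_sum_range_sq_sub n) hc⟩

theorem inscribed_le_cone_le_circumscribed (h R : ℝ) (hh : 0 < h) (hR : 0 < R)
    (r : ℝ → ℝ) (hr : ∀ z, r z = R * (1 - z / h)) (n : ℕ) (hn : 0 < n) :
    (∑ k ∈ Finset.range n, π * r ((k + 1) * h / n) ^ 2 * (h / n)) ≤ π * R ^ 2 * h / 3 ∧
    π * R ^ 2 * h / 3 ≤ ∑ k ∈ Finset.range n, π * r (k * h / n) ^ 2 * (h / n) :=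
  inscribed_le_cone_le_circumscribed_general h R hh r hr n hn
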